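/- arXiv:0909.4348 — 6 statements merged into one kernel-verified Lean document; each statement's English description precedes it below -/
import Mathlib

section
/- For any real numbers p ∈ [0,1] and ξ ∈ [-1,1], we have p·e^{ξ(1-p)} + (1-p)·e^{-ξp} ≤ e^{ξ²p(1-p)}. -/
lemma exp_le_one_add_add_sq {x : ℝ} (h : |x| ≤ 1) : Real.exp x ≤ 1 + x + x ^ 2 := by
  have hb := Real.exp_bound h (n := 2) (by norm_num)
  simp [Finset.sum_range_succ] at hb
  have h2 : |x| ^ 2 = x ^ 2 := sq_abs x
  have := abs_le.mp hb
  nlinarith [sq_nonneg x, this.2]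

theorem stmt_0 (p ξ : ℝ) (hp : p ∈ Set.Icc (0:ℝ) 1) (hξ : ξ ∈ Set.Icc (-1:ℝ) 1) :
    p * Real.exp (ξ * (1 - p)) + (1 - p) * Real.exp (-ξ * p)
      ≤ Real.exp (ξ ^ 2 * p * (1 - p)) := by
  obtain ⟨hp0, hp1⟩ := hp
  obtain ⟨hξ1, hξ2⟩ := hξ
  have hxa : |ξ| ≤ 1 := abs_le.mpr ⟨hξ1, hξ2⟩
  have h1 : |ξ * (1 - p)| ≤ 1 := by
    rw [abs_mul]
    have : |1 - p| ≤ 1 := abs_le.mpr ⟨by linarith, by linarith⟩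
    exact mul_le_one₀ hxa (abs_nonneg _) this
  have h2 : |(-ξ) * p| ≤ 1 := by
    rw [abs_mul, abs_neg]
    have : |p| ≤ 1 := abs_le.mpr ⟨by linarith, by linarith⟩
    exact mul_le_one₀ hxa (abs_nonneg _) this
  have e1 := exp_le_one_add_add_sq h1
  have e2 := exp_le_one_add_add_sq h2
  have e3 : 1 + ξ ^ 2 * p * (1 - p) ≤ Real.exp (ξ ^ 2 * p * (1 - p)) := by
    have := Real.add_one_le_exp (ξ ^ 2 * p * (1 - p)); linarith
  have m1 := mul_le_mul_of_nonneg_left e1 hp0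
  have m2 := mul_le_mul_of_nonneg_left e2 (by linarith : (0:ℝ) ≤ 1 - p)
  nlinarith [m1, m2, e3, sq_nonneg ξ, mul_nonneg hp0 (by linarith : (0:ℝ) ≤ 1 - p)]
end

section
/- Let (X_t)_{t=0,...,τ} be a process of nonnegative random vectors in R^n with X_0 = x deterministically, satisfying: (1) E[X_{t+1} | X_t] = X_t; (2) X_t and X_{t+1} differ in at most two coordinates; (3) whenever two coordinates i,j change between time t and t+1, their sum is preserved: X_{i,t+1} + X_{j,t+1} = X_{i,t} + X_{j,t}. Then for every t and every subset S ⊆ [n], E[∏_{i∈S} X_{i,t}] ≤ ∏_{i∈S} x_i. -/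
/-!
With `a = X t` and `b = X (t + 1)`, the sum-preservation condition makes the increments
`b k - a k` and `b l - a l` of two distinct coordinates of opposite signs. Induction on `S` then
gives the pointwise bound `∏_S b ≤ ∏_S a + ∑_{k ∈ S} (b k - a k) ∏_{S \ {k}} a`. Each summand has
expectation zero, since `∏_{S \ {k}} a` is `ℱ t`-measurable and `E[b k | ℱ t] = a k`; hence
`t ↦ E[∏_S X t]` is nonincreasing. The factor `∏_{S \ {k}} a` need not be bounded, so the pull-out
property is proved for nonnegative factors with lower Lebesgue integrals, which also yields the
integrability of `b k * ∏_{S \ {k}} a`.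
-/

open MeasureTheory Finset

theorem prod_le_prod_add_sum_sub_mul_prod_erase {ι : Type*} [DecidableEq ι] {a b : ι → ℝ}
    (ha : ∀ i, 0 ≤ a i) (hb : ∀ i, 0 ≤ b i)
    (hpair : ∀ k l, k ≠ l → (b k - a k) * (b l - a l) ≤ 0) (S : Finset ι) :
    ∏ i ∈ S, b i ≤ ∏ i ∈ S, a i + ∑ k ∈ S, (b k - a k) * ∏ i ∈ S.erase k, a i := by
  induction S using Finset.induction_on with
  | empty => simp
  | insert k S hk ih =>
    set L := ∑ l ∈ S, (b l - a l) * ∏ i ∈ S.erase l, a i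
    have hL : (b k - a k) * L ≤ 0 := by
      rw [mul_sum]
      refine sum_nonpos fun l hl => ?_
      rw [← mul_assoc]
      exact mul_nonpos_of_nonpos_of_nonneg (hpair k l (ne_of_mem_of_not_mem hl hk).symm)
        (prod_nonneg fun i _ => ha i)
    have herase : ∀ l ∈ S, ∏ i ∈ (insert k S).erase l, a i = a k * ∏ i ∈ S.erase l, a i :=
      fun l hl => by
        rw [erase_insert_of_ne (ne_of_mem_of_not_mem hl hk).symm,
          prod_insert fun h => hk (mem_of_mem_erase h)]
    rw [prod_insert hk, prod_insert hk, sum_insert hk, erase_insert hk,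
      sum_congr rfl fun l hl => by rw [herase l hl],
      show ∑ l ∈ S, (b l - a l) * (a k * ∏ i ∈ S.erase l, a i) = a k * L by
        rw [mul_sum]; exact sum_congr rfl fun l _ => by ring]
    nlinarith [mul_le_mul_of_nonneg_left ih (hb k)]

theorem sub_mul_sub_nonpos_of_add_eq_add {ι : Type*} {a b : ι → ℝ}
    (hsum : ∀ i j, i ≠ j → b i ≠ a i → b j ≠ a j → b i + b j = a i + a j)
    {k l : ι} (hkl : k ≠ l) : (b k - a k) * (b l - a l) ≤ 0 := by
  by_cases hk : b k = a k
  · simp [hk]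
  by_cases hl : b l = a l
  · simp [hl]
  have hl' : b l - a l = -(b k - a k) := by linarith [hsum k l hkl hk hl]
  rw [hl', mul_neg]
  exact neg_nonpos.mpr (mul_self_nonneg _)

section PullOut

variable {Ω : Type*} {m m0 : MeasurableSpace Ω} {μ : Measure Ω} {f g h : Ω → ℝ}

-- The measures with densities `f` and `μ[f|m]` agree on `m`-measurable sets.
theorem lintegral_ofReal_mul_eq_condExp (hm : m ≤ m0) [SigmaFinite (μ.trim hm)]
    (hf : Integrable f μ) (hf0 : 0 ≤ᵐ[μ] f) {G : Ω → ENNReal} (hG : Measurable[m] G) :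
    ∫⁻ ω, ENNReal.ofReal (f ω) * G ω ∂μ = ∫⁻ ω, ENNReal.ofReal (μ[f|m] ω) * G ω ∂μ := by
  have hdensity : ∀ {F : Ω → ℝ}, Integrable F μ →
      ∫⁻ ω, ENNReal.ofReal (F ω) * G ω ∂μ
        = ∫⁻ ω, G ω ∂(μ.withDensity fun ω => ENNReal.ofReal (F ω)).trim hm := fun hF => by
    rw [lintegral_trim hm hG, lintegral_withDensity_eq_lintegral_mul₀
      hF.aemeasurable.ennreal_ofReal (hG.mono hm le_rfl).aemeasurable]
    rfl
  rw [hdensity hf, hdensity integrable_condExp]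
  congr 1
  refine @Measure.ext _ m _ _ fun s hs => ?_
  rw [trim_measurableSet_eq hm hs, trim_measurableSet_eq hm hs, withDensity_apply _ (hm s hs),
    withDensity_apply _ (hm s hs),
    ← ofReal_integral_eq_lintegral_ofReal hf.integrableOn (ae_restrict_of_ae hf0),
    ← ofReal_integral_eq_lintegral_ofReal integrable_condExp.integrableOn
      (ae_restrict_of_ae (condExp_nonneg hf0)), setIntegral_condExp hm hf hs]

theorem lintegral_ofReal_mul_eq_of_condExp_eq (hm : m ≤ m0) [SigmaFinite (μ.trim hm)]
    (hf : Integrable f μ) (hf0 : 0 ≤ᵐ[μ] f) (hcond : μ[f|m] =ᵐ[μ] h) (hg : Measurable[m] g)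
    (hg0 : 0 ≤ g) :
    ∫⁻ ω, ENNReal.ofReal (f ω * g ω) ∂μ = ∫⁻ ω, ENNReal.ofReal (h ω * g ω) ∂μ := by
  simp_rw [ENNReal.ofReal_mul' (hg0 _)]
  rw [lintegral_ofReal_mul_eq_condExp hm hf hf0 hg.ennreal_ofReal]
  exact lintegral_congr_ae (hcond.mono fun ω hω => by simp only [hω])

theorem integrable_mul_of_condExp_eq (hm : m ≤ m0) [SigmaFinite (μ.trim hm)]
    (hf : Integrable f μ) (hf0 : 0 ≤ᵐ[μ] f) (hcond : μ[f|m] =ᵐ[μ] h) (hg : Measurable[m] g)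
    (hg0 : 0 ≤ g) (hhg : Integrable (fun ω => h ω * g ω) μ) :
    Integrable (fun ω => f ω * g ω) μ := by
  have hfg0 : 0 ≤ᵐ[μ] fun ω => f ω * g ω := hf0.mono fun ω hω => mul_nonneg hω (hg0 ω)
  have hhg0 : 0 ≤ᵐ[μ] fun ω => h ω * g ω :=
    (condExp_nonneg hf0).congr Filter.EventuallyEq.rfl hcond |>.mono
      fun ω hω => mul_nonneg hω (hg0 ω)
  refine ⟨hf.1.mul (hg.mono hm le_rfl).aestronglyMeasurable, ?_⟩
  rw [hasFiniteIntegral_iff_ofReal hfg0,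
    lintegral_ofReal_mul_eq_of_condExp_eq hm hf hf0 hcond hg hg0]
  exact (hasFiniteIntegral_iff_ofReal hhg0).mp hhg.2

theorem integral_mul_eq_of_condExp_eq (hm : m ≤ m0) [SigmaFinite (μ.trim hm)]
    (hf : Integrable f μ) (hf0 : 0 ≤ᵐ[μ] f) (hcond : μ[f|m] =ᵐ[μ] h) (hg : Measurable[m] g)
    (hg0 : 0 ≤ g) (hhg : Integrable (fun ω => h ω * g ω) μ) :
    ∫ ω, f ω * g ω ∂μ = ∫ ω, h ω * g ω ∂μ := by
  have hh0 : 0 ≤ᵐ[μ] h := (condExp_nonneg hf0).congr Filter.EventuallyEq.rfl hcond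
  rw [integral_eq_lintegral_of_nonneg_ae (hf0.mono fun ω hω => mul_nonneg hω (hg0 ω))
      (integrable_mul_of_condExp_eq hm hf hf0 hcond hg hg0 hhg).1,
    integral_eq_lintegral_of_nonneg_ae (hh0.mono fun ω hω => mul_nonneg hω (hg0 ω)) hhg.1,
    lintegral_ofReal_mul_eq_of_condExp_eq hm hf hf0 hcond hg hg0]

end PullOut

theorem integral_prod_le_of_condExp_eq {ι Ω : Type*} [DecidableEq ι] {m m0 : MeasurableSpace Ω}
    {μ : Measure Ω} (hm : m ≤ m0) [SigmaFinite (μ.trim hm)] {a b : Ω → ι → ℝ}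
    (ha : ∀ ω i, 0 ≤ a ω i) (hb : ∀ ω i, 0 ≤ b ω i) (ham : ∀ i, Measurable[m] fun ω => a ω i)
    (hbint : ∀ i, Integrable (fun ω => b ω i) μ)
    (hcond : ∀ i, μ[fun ω => b ω i|m] =ᵐ[μ] fun ω => a ω i)
    (hpair : ∀ ω k l, k ≠ l → (b ω k - a ω k) * (b ω l - a ω l) ≤ 0) (S : Finset ι)
    (haint : Integrable (fun ω => ∏ i ∈ S, a ω i) μ) :
    ∫ ω, ∏ i ∈ S, b ω i ∂μ ≤ ∫ ω, ∏ i ∈ S, a ω i ∂μ := by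
  have hterm : ∀ k ∈ S, Integrable (fun ω => (b ω k - a ω k) * ∏ i ∈ S.erase k, a ω i) μ ∧
      ∫ ω, (b ω k - a ω k) * ∏ i ∈ S.erase k, a ω i ∂μ = 0 := by
    intro k hk
    have hfactor : (fun ω => a ω k * ∏ i ∈ S.erase k, a ω i) = fun ω => ∏ i ∈ S, a ω i :=
      funext fun ω => mul_prod_erase S (a ω) hk
    have hsplit : (fun ω => (b ω k - a ω k) * ∏ i ∈ S.erase k, a ω i)
        = fun ω => b ω k * ∏ i ∈ S.erase k, a ω i - ∏ i ∈ S, a ω i :=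
      funext fun ω => by rw [sub_mul, mul_prod_erase S (a ω) hk]
    have hbk0 : 0 ≤ᵐ[μ] fun ω => b ω k := ae_of_all _ fun ω => hb ω k
    have hg : Measurable[m] fun ω => ∏ i ∈ S.erase k, a ω i :=
      Finset.measurable_prod _ fun i _ => ham i
    have hg0 : 0 ≤ fun ω => ∏ i ∈ S.erase k, a ω i := fun ω => prod_nonneg fun i _ => ha ω i
    have haint' : Integrable (fun ω => a ω k * ∏ i ∈ S.erase k, a ω i) μ := by rwa [hfactor]
    have hpull_int := integrable_mul_of_condExp_eq hm (hbint k) hbk0 (hcond k) hg hg0 haint'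
    have hpull_eq : ∫ ω, b ω k * ∏ i ∈ S.erase k, a ω i ∂μ = ∫ ω, ∏ i ∈ S, a ω i ∂μ := by
      rw [integral_mul_eq_of_condExp_eq hm (hbint k) hbk0 (hcond k) hg hg0 haint', hfactor]
    rw [hsplit, integral_sub hpull_int haint, hpull_eq, sub_self]
    exact ⟨hpull_int.sub haint, rfl⟩
  have hsum_int : Integrable
      (fun ω => ∑ k ∈ S, (b ω k - a ω k) * ∏ i ∈ S.erase k, a ω i) μ :=
    integrable_finsetSum S fun k hk => (hterm k hk).1
  calc ∫ ω, ∏ i ∈ S, b ω i ∂μ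
      ≤ ∫ ω, (∏ i ∈ S, a ω i + ∑ k ∈ S, (b ω k - a ω k) * ∏ i ∈ S.erase k, a ω i) ∂μ :=
        integral_mono_of_nonneg (ae_of_all _ fun ω => prod_nonneg fun i _ => hb ω i)
          (haint.add hsum_int) (ae_of_all _ fun ω =>
            prod_le_prod_add_sum_sub_mul_prod_erase (ha ω) (hb ω) (hpair ω) S)
    _ = ∫ ω, ∏ i ∈ S, a ω i ∂μ := by
        rw [integral_add haint hsum_int, integral_finsetSum S fun k hk => (hterm k hk).1,
          sum_eq_zero fun k hk => (hterm k hk).2, add_zero]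

theorem stmt_3_general {Ω : Type*} [m0 : MeasurableSpace Ω] (μ : Measure Ω) [IsProbabilityMeasure μ]
    {n : ℕ} (τ : ℕ) (X : ℕ → Ω → Fin n → ℝ) (x : Fin n → ℝ)
    (ℱ : Filtration ℕ m0)
    (hadapt : ∀ t i, Measurable[ℱ t] fun ω => X t ω i)
    (hX0 : ∀ ω i, X 0 ω i = x i)
    (hnonneg : ∀ t ω i, 0 ≤ X t ω i)
    (hint : ∀ t (S : Finset (Fin n)), Integrable (fun ω => ∏ i ∈ S, X t ω i) μ)
    (hmart : ∀ t i, μ[(fun ω => X (t + 1) ω i) | ℱ t] =ᵐ[μ] fun ω => X t ω i)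
    (hsum : ∀ t ω i j, i ≠ j → X (t + 1) ω i ≠ X t ω i → X (t + 1) ω j ≠ X t ω j →
      X (t + 1) ω i + X (t + 1) ω j = X t ω i + X t ω j) :
    ∀ t ≤ τ, ∀ S : Finset (Fin n),
      ∫ ω, ∏ i ∈ S, X t ω i ∂μ ≤ ∏ i ∈ S, x i := by
  intro t _ S
  have hstep : ∀ s, ∫ ω, ∏ i ∈ S, X (s + 1) ω i ∂μ ≤ ∫ ω, ∏ i ∈ S, X s ω i ∂μ := fun s =>
    integral_prod_le_of_condExp_eq (ℱ.le s) (hnonneg s) (hnonneg (s + 1)) (hadapt s)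
      (fun i => by simpa using hint (s + 1) {i}) (hmart s)
      (fun ω _ _ => sub_mul_sub_nonpos_of_add_eq_add (hsum s ω)) S (hint s S)
  calc ∫ ω, ∏ i ∈ S, X t ω i ∂μ ≤ ∫ ω, ∏ i ∈ S, X 0 ω i ∂μ :=
        antitone_nat_of_succ_le (f := fun s => ∫ ω, ∏ i ∈ S, X s ω i ∂μ) hstep (Nat.zero_le t)
    _ = ∏ i ∈ S, x i := by simp [hX0]

theorem stmt_3 {Ω : Type*} [m0 : MeasurableSpace Ω] (μ : Measure Ω) [IsProbabilityMeasure μ]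
    {n : ℕ} (τ : ℕ) (X : ℕ → Ω → Fin n → ℝ) (x : Fin n → ℝ)
    (ℱ : Filtration ℕ m0)
    (hadapt : ∀ t i, Measurable[ℱ t] fun ω => X t ω i)
    (hX0 : ∀ ω i, X 0 ω i = x i)
    (hnonneg : ∀ t ω i, 0 ≤ X t ω i)
    (hint : ∀ t (S : Finset (Fin n)), Integrable (fun ω => ∏ i ∈ S, X t ω i) μ)
    (hmart : ∀ t i, μ[(fun ω => X (t + 1) ω i) | ℱ t] =ᵐ[μ] fun ω => X t ω i)
    (htwo : ∀ t ω, ∃ i j : Fin n, ∀ k, k ≠ i → k ≠ j → X (t + 1) ω k = X t ω k)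
    (hsum : ∀ t ω i j, i ≠ j → X (t + 1) ω i ≠ X t ω i → X (t + 1) ω j ≠ X t ω j →
      X (t + 1) ω i + X (t + 1) ω j = X t ω i + X t ω j) :
    ∀ t ≤ τ, ∀ S : Finset (Fin n),
      ∫ ω, ∏ i ∈ S, X t ω i ∂μ ≤ ∏ i ∈ S, x i :=
  stmt_3_general (m0 := m0) μ τ X x ℱ hadapt hX0 hnonneg hint hmart hsum
end

section
/- Let f: 2^N → R_+ be a monotone submodular function on a finite ground set N = {1,...,n} with all marginal values f(S+i) - f(S) in [0,1]. Let X_1,...,X_n be independent {0,1}-valued random variables, let R = {i : X_i = 1}, and let μ = E[f(R)]. Then for any δ > 0, Pr[f(R) ≥ (1+δ)μ] ≤ (e^δ/(1+δ)^{1+δ})^μ. -/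
/-!
Chernoff's method with `λ = log (1 + δ)` reduces the bound to `E[exp (λ f R)] ≤ exp ((e^λ - 1) μ)`.
Expose the coordinates one at a time. Writing `d_i S = f (insert i S) - f S ∈ [0, 1]`, convexity
of `exp` gives `exp (λ d_i) ≤ 1 + (e^λ - 1) d_i`, so adding coordinate `i` replaces the moment
generating function by at most `E[exp (λ f) (1 + p_i (e^λ - 1) d_i)]`. As `exp (λ f)` is increasing
and, by submodularity, `d_i` is decreasing, Harris' inequality splits this expectation into
`E[exp (λ f)] (1 + p_i (e^λ - 1) E[d_i])`, and the increments `p_i E[d_i]` add up to `μ - f ∅`.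
-/

open MeasureTheory ProbabilityTheory Finset

section BernoulliCube

variable {ι : Type*} [DecidableEq ι]

def bernoulliWeight (p : ι → ℝ) (s S : Finset ι) : ℝ :=
  ∏ i ∈ s, if i ∈ S then p i else 1 - p i

/-- The expectation of `g R` for the random set `R ⊆ s` containing each `i ∈ s` independently
with probability `p i`. -/
def bernoulliExpect (p : ι → ℝ) (s : Finset ι) (g : Finset ι → ℝ) : ℝ :=
  ∑ S ∈ s.powerset, bernoulliWeight p s S * g S

variable {p : ι → ℝ} {s : Finset ι} {i : ι}

lemma bernoulliWeight_insert (hi : i ∉ s) (S : Finset ι) :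
    bernoulliWeight p (insert i s) S = (if i ∈ S then p i else 1 - p i) * bernoulliWeight p s S :=
  prod_insert hi

lemma bernoulliWeight_insert_right (hi : i ∉ s) (S : Finset ι) :
    bernoulliWeight p s (insert i S) = bernoulliWeight p s S :=
  prod_congr rfl fun j hj => by simp only [mem_insert, ne_of_mem_of_not_mem hj hi, false_or]

lemma bernoulliWeight_nonneg (hp : ∀ i, p i ∈ Set.Icc (0 : ℝ) 1) (s S : Finset ι) :
    0 ≤ bernoulliWeight p s S :=
  prod_nonneg fun i _ => by split_ifs <;> linarith [(hp i).1, (hp i).2]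

@[simp]
lemma bernoulliExpect_empty (g : Finset ι → ℝ) : bernoulliExpect p ∅ g = g ∅ := by
  simp [bernoulliExpect, bernoulliWeight]

lemma bernoulliExpect_insert (hi : i ∉ s) (g : Finset ι → ℝ) :
    bernoulliExpect p (insert i s) g
      = bernoulliExpect p s fun S => (1 - p i) * g S + p i * g (insert i S) := by
  simp only [bernoulliExpect, sum_powerset_insert hi, ← sum_add_distrib]
  refine sum_congr rfl fun S hS => ?_
  have hiS : i ∉ S := fun h => hi (mem_powerset.1 hS h)
  rw [bernoulliWeight_insert hi, bernoulliWeight_insert hi, bernoulliWeight_insert_right hi,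
    if_neg hiS, if_pos (mem_insert_self i S)]
  ring

lemma bernoulliExpect_add (g h : Finset ι → ℝ) :
    bernoulliExpect p s (fun S => g S + h S) = bernoulliExpect p s g + bernoulliExpect p s h := by
  simp only [bernoulliExpect, mul_add, sum_add_distrib]

lemma bernoulliExpect_const_mul (c : ℝ) (g : Finset ι → ℝ) :
    bernoulliExpect p s (fun S => c * g S) = c * bernoulliExpect p s g := by
  simp only [bernoulliExpect, mul_sum, mul_left_comm]

lemma bernoulliExpect_mono (hp : ∀ i, p i ∈ Set.Icc (0 : ℝ) 1) {g h : Finset ι → ℝ}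
    (hgh : ∀ S, g S ≤ h S) : bernoulliExpect p s g ≤ bernoulliExpect p s h :=
  sum_le_sum fun S _ => mul_le_mul_of_nonneg_left (hgh S) (bernoulliWeight_nonneg hp s S)

/-- Harris' inequality for product measures on the cube. -/
theorem bernoulliExpect_mul_le_of_monotone_of_antitone (hp : ∀ i, p i ∈ Set.Icc (0 : ℝ) 1)
    {g h : Finset ι → ℝ} (hg : Monotone g) (hh : Antitone h) :
    bernoulliExpect p s (fun S => g S * h S) ≤ bernoulliExpect p s g * bernoulliExpect p s h := by
  induction s using Finset.induction_on generalizing g h with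
  | empty => simp
  | @insert i s hi ih =>
    obtain ⟨hq0, hq1⟩ := hp i
    have hins : Monotone (insert i : Finset ι → Finset ι) := fun _ _ => insert_subset_insert i
    rw [bernoulliExpect_insert hi, bernoulliExpect_insert hi g, bernoulliExpect_insert hi h]
    refine (bernoulliExpect_mono hp fun S => ?_).trans
      (ih ((hg.const_mul (sub_nonneg.2 hq1)).add ((hg.comp hins).const_mul hq0))
        ((hh.const_mul (sub_nonneg.2 hq1)).add ((hh.comp_monotone hins).const_mul hq0)))
    -- one-coordinate Chebyshev: the defect is `q (1 - q) (g S⁺ - g S) (h S - h S⁺) ≥ 0`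
    have hgS := hg (subset_insert i S)
    have hhS := hh (subset_insert i S)
    nlinarith [mul_nonneg (mul_nonneg hq0 (sub_nonneg.2 hq1))
      (mul_nonneg (sub_nonneg.2 hgS) (sub_nonneg.2 hhS))]

end BernoulliCube

lemma Real.exp_mul_le_one_add_mul {x : ℝ} (hx0 : 0 ≤ x) (hx1 : x ≤ 1) (l : ℝ) :
    Real.exp (l * x) ≤ 1 + (Real.exp l - 1) * x := by
  have h := convexOn_exp.2 (Set.mem_univ 0) (Set.mem_univ l) (sub_nonneg.2 hx1) hx0 (by ring)
  simp only [smul_eq_mul, mul_zero, zero_add, Real.exp_zero, mul_one, mul_comm x l] at h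
  linarith

section Submodular

variable {ι : Type*} [DecidableEq ι] {f : Finset ι → ℝ}

lemma antitone_marginal (hmono : Monotone f) (hsub : ∀ A B, f (A ∪ B) + f (A ∩ B) ≤ f A + f B)
    (i : ι) : Antitone fun S => f (insert i S) - f S := by
  intro A B hAB
  have h := hsub (insert i A) B
  rw [insert_union, union_eq_right.2 hAB] at h
  linarith [hmono (subset_inter (subset_insert i A) hAB)]

variable {p : ι → ℝ} {s : Finset ι} {i : ι} {l : ℝ}

lemma bernoulliExpect_insert_eq_add_marginal (hi : i ∉ s) :
    bernoulliExpect p (insert i s) f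
      = bernoulliExpect p s f + p i * bernoulliExpect p s fun S => f (insert i S) - f S := by
  rw [bernoulliExpect_insert hi, ← bernoulliExpect_const_mul, ← bernoulliExpect_add]
  congr 1
  ext S
  ring

lemma bernoulliExpect_exp_insert_le (hp : ∀ i, p i ∈ Set.Icc (0 : ℝ) 1) (hmono : Monotone f)
    (hsub : ∀ A B, f (A ∪ B) + f (A ∩ B) ≤ f A + f B) (hmarg : ∀ S i, f (insert i S) ≤ f S + 1)
    (hl : 0 ≤ l) (hi : i ∉ s) :
    bernoulliExpect p (insert i s) (fun S => Real.exp (l * f S))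
      ≤ bernoulliExpect p s (fun S => Real.exp (l * f S))
        * Real.exp (p i * (Real.exp l - 1)
          * bernoulliExpect p s fun S => f (insert i S) - f S) := by
  set E := bernoulliExpect p s fun S => Real.exp (l * f S)
  set D := bernoulliExpect p s fun S => f (insert i S) - f S
  set c := p i * (Real.exp l - 1)
  have hc : 0 ≤ c := mul_nonneg (hp i).1 (by linarith [Real.add_one_le_exp l])
  have hpoint : ∀ S, (1 - p i) * Real.exp (l * f S) + p i * Real.exp (l * f (insert i S))
      ≤ Real.exp (l * f S) + c * (Real.exp (l * f S) * (f (insert i S) - f S)) := by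
    intro S
    have hstep : Real.exp (l * f (insert i S))
        ≤ Real.exp (l * f S) * (1 + (Real.exp l - 1) * (f (insert i S) - f S)) := by
      rw [show l * f (insert i S) = l * f S + l * (f (insert i S) - f S) by ring, Real.exp_add]
      exact mul_le_mul_of_nonneg_left (Real.exp_mul_le_one_add_mul
        (sub_nonneg.2 (hmono (subset_insert i S))) (by linarith [hmarg S i]) l) (Real.exp_pos _).le
    nlinarith [mul_le_mul_of_nonneg_left hstep (hp i).1]
  have hharris : bernoulliExpect p s (fun S => Real.exp (l * f S) * (f (insert i S) - f S))
      ≤ E * D :=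
    bernoulliExpect_mul_le_of_monotone_of_antitone hp
      (fun A B hAB => Real.exp_le_exp.2 (mul_le_mul_of_nonneg_left (hmono hAB) hl))
      (antitone_marginal hmono hsub i)
  have hE : 0 ≤ E :=
    sum_nonneg fun S _ => mul_nonneg (bernoulliWeight_nonneg hp s S) (Real.exp_pos _).le
  calc bernoulliExpect p (insert i s) (fun S => Real.exp (l * f S))
      ≤ bernoulliExpect p s fun S =>
          Real.exp (l * f S) + c * (Real.exp (l * f S) * (f (insert i S) - f S)) := by
        rw [bernoulliExpect_insert hi]
        exact bernoulliExpect_mono hp hpoint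
    _ ≤ E + c * (E * D) := by
        rw [bernoulliExpect_add, bernoulliExpect_const_mul]
        gcongr
    _ = E * (1 + c * D) := by ring
    _ ≤ E * Real.exp (c * D) := by
        gcongr
        linarith [Real.add_one_le_exp (c * D)]

theorem bernoulliExpect_exp_mul_le (hp : ∀ i, p i ∈ Set.Icc (0 : ℝ) 1) (hmono : Monotone f)
    (hsub : ∀ A B, f (A ∪ B) + f (A ∩ B) ≤ f A + f B) (hmarg : ∀ S i, f (insert i S) ≤ f S + 1)
    (hl : 0 ≤ l) (s : Finset ι) :
    bernoulliExpect p s (fun S => Real.exp (l * f S))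
      ≤ Real.exp (l * f ∅ + (Real.exp l - 1) * (bernoulliExpect p s f - f ∅)) := by
  induction s using Finset.induction_on with
  | empty => simp
  | @insert i s hi ih =>
    calc bernoulliExpect p (insert i s) (fun S => Real.exp (l * f S))
        ≤ Real.exp (l * f ∅ + (Real.exp l - 1) * (bernoulliExpect p s f - f ∅))
          * Real.exp (p i * (Real.exp l - 1)
            * bernoulliExpect p s fun S => f (insert i S) - f S) :=
          (bernoulliExpect_exp_insert_le hp hmono hsub hmarg hl hi).trans
            (mul_le_mul_of_nonneg_right ih (Real.exp_pos _).le)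
      _ = _ := by rw [← Real.exp_add, bernoulliExpect_insert_eq_add_marginal hi]; ring_nf

end Submodular

section IndependentBits

variable {ι : Type*} [DecidableEq ι]

lemma measurable_ite_mem_one_sub {α : Type*} [MeasurableSpace α] {x : α → ℝ} (hx : Measurable x)
    (i : ι) (S : Finset ι) : Measurable fun a => if i ∈ S then x a else 1 - x a := by
  split_ifs
  exacts [hx, hx.const_sub 1]

variable [Fintype ι]

lemma prod_ite_mem_eq_ite_eq_filter {x : ι → ℝ} (hx : ∀ i, x i = 0 ∨ x i = 1) (S : Finset ι) :
    (∏ i, if i ∈ S then x i else 1 - x i) = if S = univ.filter (x · = 1) then 1 else 0 := by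
  have hbit : ∀ i, (if i ∈ S then x i else 1 - x i) = if (i ∈ S ↔ x i = 1) then 1 else 0 := by
    intro i
    rcases hx i with h | h <;> by_cases hi : i ∈ S <;> simp [h, hi]
  simp only [hbit, prod_boole, mem_univ, true_implies]
  congr 1
  simp only [Finset.ext_iff, mem_filter, mem_univ, true_and]

lemma eq_sum_prod_ite_mem_mul {x : ι → ℝ} (hx : ∀ i, x i = 0 ∨ x i = 1) (g : Finset ι → ℝ) :
    g (univ.filter (x · = 1)) = ∑ S, (∏ i, if i ∈ S then x i else 1 - x i) * g S := by
  simp only [prod_ite_mem_eq_ite_eq_filter hx, ite_mul, one_mul, zero_mul, sum_ite_eq', mem_univ,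
    if_true]

variable {Ω : Type*} [MeasurableSpace Ω] {P : Measure Ω} [IsProbabilityMeasure P]
  {X : ι → Ω → ℝ}

lemma integral_mem_Icc_of_eq_zero_or_eq_one {Y : Ω → ℝ} (h01 : ∀ ω, Y ω = 0 ∨ Y ω = 1) :
    ∫ ω, Y ω ∂P ∈ Set.Icc (0 : ℝ) 1 := by
  have hY : ∀ ω, Y ω ∈ Set.Icc (0 : ℝ) 1 := fun ω => by rcases h01 ω with h | h <;> simp [h]
  refine ⟨integral_nonneg fun ω => (hY ω).1, ?_⟩
  calc ∫ ω, Y ω ∂P ≤ ∫ _, 1 ∂P := integral_mono_of_nonneg (ae_of_all _ fun ω => (hY ω).1)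
        (integrable_const 1) (ae_of_all _ fun ω => (hY ω).2)
    _ = 1 := by simp

lemma integrable_prod_ite_mem (hmeas : ∀ i, Measurable (X i)) (h01 : ∀ i ω, X i ω = 0 ∨ X i ω = 1)
    (S : Finset ι) : Integrable (fun ω => ∏ i, if i ∈ S then X i ω else 1 - X i ω) P := by
  refine Integrable.mono' (integrable_const 1) ?_ (ae_of_all _ fun ω => ?_)
  · exact (Finset.measurable_prod _ fun i _ =>
      measurable_ite_mem_one_sub (hmeas i) i S).aestronglyMeasurable
  · rw [prod_ite_mem_eq_ite_eq_filter (h01 · ω)]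
    split_ifs <;> simp

lemma integrable_comp_filter (hmeas : ∀ i, Measurable (X i)) (h01 : ∀ i ω, X i ω = 0 ∨ X i ω = 1)
    (g : Finset ι → ℝ) : Integrable (fun ω => g (univ.filter (X · ω = 1))) P := by
  simp_rw [eq_sum_prod_ite_mem_mul (h01 · _) g]
  exact integrable_finsetSum _ fun S _ => (integrable_prod_ite_mem hmeas h01 S).mul_const _

lemma integral_comp_filter (hmeas : ∀ i, Measurable (X i)) (h01 : ∀ i ω, X i ω = 0 ∨ X i ω = 1)
    (hindep : iIndepFun X P) (g : Finset ι → ℝ) :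
    ∫ ω, g (univ.filter (X · ω = 1)) ∂P = bernoulliExpect (fun i => ∫ ω, X i ω ∂P) univ g := by
  have hint : ∀ i, Integrable (X i) P := fun i =>
    Integrable.mono' (integrable_const 1) (hmeas i).aestronglyMeasurable
      (ae_of_all _ fun ω => by rcases h01 i ω with h | h <;> simp [h])
  have hfactor : ∀ S, ∫ ω, ∏ i, (if i ∈ S then X i ω else 1 - X i ω) ∂P
      = bernoulliWeight (fun i => ∫ ω, X i ω ∂P) univ S := by
    intro S
    have hY : iIndepFun (fun i ω => if i ∈ S then X i ω else 1 - X i ω) P :=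
      hindep.comp _ fun i => measurable_ite_mem_one_sub measurable_id i S
    rw [hY.integral_fun_prod_eq_prod_integral fun i =>
      (measurable_ite_mem_one_sub (hmeas i) i S).aestronglyMeasurable]
    refine prod_congr rfl fun i _ => ?_
    split_ifs
    · rfl
    · simp [integral_sub (integrable_const 1) (hint i)]
  simp_rw [eq_sum_prod_ite_mem_mul (h01 · _) g]
  rw [integral_finsetSum _ fun S _ => (integrable_prod_ite_mem hmeas h01 S).mul_const _,
    bernoulliExpect, powerset_univ]
  simp only [integral_mul_const, hfactor]

end IndependentBits

theorem stmt_5 {Ω : Type*} [MeasurableSpace Ω] (P : Measure Ω) [IsProbabilityMeasure P]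
    {n : ℕ} (f : Finset (Fin n) → ℝ)
    (hnonneg : ∀ S, 0 ≤ f S)
    (hmono : ∀ S T, S ⊆ T → f S ≤ f T)
    (hsub : ∀ A B, f (A ∪ B) + f (A ∩ B) ≤ f A + f B)
    (hmarg : ∀ (S : Finset (Fin n)) (i : Fin n),
      f (insert i S) - f S ∈ Set.Icc (0:ℝ) 1)
    (X : Fin n → Ω → ℝ)
    (hmeas : ∀ i, Measurable (X i))
    (h01 : ∀ i ω, X i ω = 0 ∨ X i ω = 1)
    (hindep : iIndepFun X P)
    (R : Ω → Finset (Fin n))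
    (hR : ∀ ω, R ω = Finset.univ.filter fun i => X i ω = 1)
    (m : ℝ) (hm : m = ∫ ω, f (R ω) ∂P)
    (δ : ℝ) (hδ : 0 < δ) :
    (P {ω | (1 + δ) * m ≤ f (R ω)}).toReal
      ≤ (Real.exp δ / (1 + δ) ^ (1 + δ)) ^ m := by
  have h1δ : 0 < 1 + δ := by linarith
  set l := Real.log (1 + δ)
  have hl : 0 ≤ l := Real.log_nonneg (by linarith)
  have hR' : R = fun ω => univ.filter (X · ω = 1) := funext hR
  subst hR'
  have hp i := integral_mem_Icc_of_eq_zero_or_eq_one (P := P) (h01 i)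
  have hmgf : mgf (fun ω => f (univ.filter (X · ω = 1))) P l ≤ Real.exp (δ * m) := by
    rw [mgf, integral_comp_filter hmeas h01 hindep (fun S => Real.exp (l * f S)), hm,
      integral_comp_filter hmeas h01 hindep]
    refine (bernoulliExpect_exp_mul_le hp (fun S T => hmono S T) hsub
      (fun S i => by linarith [(hmarg S i).2]) hl univ).trans (Real.exp_le_exp.2 ?_)
    have hlδ : l ≤ δ := by linarith [Real.log_le_sub_one_of_pos h1δ]
    rw [Real.exp_log h1δ]
    nlinarith [hnonneg ∅]
  calc (P {ω | (1 + δ) * m ≤ f (univ.filter (X · ω = 1))}).toReal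
      ≤ Real.exp (-l * ((1 + δ) * m)) * mgf (fun ω => f (univ.filter (X · ω = 1))) P l :=
        measure_ge_le_exp_mul_mgf _ hl
          (integrable_comp_filter hmeas h01 fun S => Real.exp (l * f S))
    _ ≤ Real.exp (-l * ((1 + δ) * m)) * Real.exp (δ * m) := by gcongr
    _ = (Real.exp δ / (1 + δ) ^ (1 + δ)) ^ m := by
        rw [Real.div_rpow (Real.exp_pos δ).le (Real.rpow_nonneg h1δ.le _), ← Real.exp_mul,
          ← Real.rpow_mul h1δ.le, Real.rpow_def_of_pos h1δ, div_eq_mul_inv, ← Real.exp_neg,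
          ← Real.exp_add, ← Real.exp_add]
        simp only [l]
        ring_nf
end

section
/- Let f: 2^{[n]} → R be submodular and F its multilinear extension. If x ≤ y coordinatewise in [0,1]^n, then for every coordinate i, ∂F/∂x_i(x) ≥ ∂F/∂x_i(y). -/
open Finset

/-
The partial derivative ∂F/∂x_i is itself the multilinear extension, over the other coordinates,
of the marginal value T ↦ f (T ∪ {i}) - f T, because F is affine in x_i. Submodularity says this
marginal value can only drop when an element j ≠ i is added to T, and the multilinear extension
of a set function that drops under every insertion is antitone on the cube: splitting off one
coordinate z_j writes it as z_j A + (1 - z_j) B with A ≤ B, so raising z_j moves weight to the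
smaller term, and induction on the ground set handles A and B.
-/

variable {ι : Type*} [DecidableEq ι]

noncomputable def multilinearExt (E : Finset ι) (m : Finset ι → ℝ) (z : ι → ℝ) : ℝ :=
  ∑ T ∈ E.powerset, m T * ((∏ j ∈ T, z j) * ∏ j ∈ E \ T, (1 - z j))

section multilinearExt

variable {E : Finset ι} {m : Finset ι → ℝ} {z : ι → ℝ}

theorem multilinearExt_congr {w : ι → ℝ} (h : ∀ j ∈ E, z j = w j) :
    multilinearExt E m z = multilinearExt E m w := by
  refine sum_congr rfl fun T hT => ?_
  have hTE := mem_powerset.mp hT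
  rw [prod_congr rfl fun j hj => h j (hTE hj),
    prod_congr rfl fun j hj => congrArg (1 - ·) (h j (mem_sdiff.mp hj).1)]

theorem multilinearExt_sub {m' : Finset ι → ℝ} :
    multilinearExt E (fun T => m T - m' T) z = multilinearExt E m z - multilinearExt E m' z := by
  simp only [multilinearExt, sub_mul, sum_sub_distrib]

theorem multilinearExt_insert {i : ι} (hi : i ∉ E) :
    multilinearExt (insert i E) m z =
      z i * multilinearExt E (fun T => m (insert i T)) z + (1 - z i) * multilinearExt E m z := by
  rw [multilinearExt, sum_powerset_insert hi, multilinearExt, multilinearExt, mul_sum, mul_sum,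
    add_comm]
  congr 1 <;> refine sum_congr rfl fun T hT => ?_
  · have hiT : i ∉ T := fun h => hi (mem_powerset.mp hT h)
    rw [insert_sdiff_insert, sdiff_insert_of_notMem hi, prod_insert hiT]
    ring
  · have hiT : i ∉ T := fun h => hi (mem_powerset.mp hT h)
    rw [insert_sdiff_of_notMem _ hiT, prod_insert fun h => hi (mem_sdiff.mp h).1]
    ring

theorem multilinearExt_le_multilinearExt {m' : Finset ι → ℝ} (hz : z ∈ Set.Icc 0 1)
    (h : ∀ T, m' T ≤ m T) :
    multilinearExt E m' z ≤ multilinearExt E m z := by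
  refine sum_le_sum fun T _ => mul_le_mul_of_nonneg_right (h T) (mul_nonneg ?_ ?_)
  · exact prod_nonneg fun k _ => hz.1 k
  · exact prod_nonneg fun k _ => sub_nonneg.mpr (hz.2 k)

theorem antitoneOn_multilinearExt (hm : ∀ j ∈ E, ∀ T, m (insert j T) ≤ m T) :
    AntitoneOn (multilinearExt E m) (Set.Icc 0 1) := by
  induction E using Finset.induction_on generalizing m with
  | empty => simp [AntitoneOn, multilinearExt]
  | @insert j E hj ih =>
    intro z hz w hw hzw
    rw [multilinearExt_insert hj, multilinearExt_insert hj]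
    set A := multilinearExt E (fun T => m (insert j T))
    set B := multilinearExt E m
    have hA : A w ≤ A z := ih (fun k hk T => by
      simpa only [Finset.insert_comm j k] using hm k (mem_insert_of_mem hk) (insert j T))
      hz hw hzw
    have hB : B w ≤ B z := ih (fun k hk => hm k (mem_insert_of_mem hk)) hz hw hzw
    have hAB : A z ≤ B z := multilinearExt_le_multilinearExt hz (hm j (mem_insert_self j E))
    have hwj : 0 ≤ w j ∧ w j ≤ 1 := ⟨hw.1 j, hw.2 j⟩
    linarith [mul_le_mul_of_nonneg_left hA hwj.1,
      mul_le_mul_of_nonneg_left hB (sub_nonneg.mpr hwj.2),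
      mul_le_mul_of_nonneg_right (hzw j) (sub_nonneg.mpr hAB)]

theorem multilinearExt_add_smul_single {i : ι} (hi : i ∉ E) (t : ℝ) :
    multilinearExt (insert i E) m (z + t • Pi.single i 1) =
      multilinearExt (insert i E) m z + t * multilinearExt E (fun T => m (insert i T) - m T) z := by
  have hcoord : ∀ j ∈ E, (z + t • Pi.single i 1 : ι → ℝ) j = z j := fun j hj => by
    simp [ne_of_mem_of_not_mem hj hi]
  rw [multilinearExt_insert hi, multilinearExt_insert hi, multilinearExt_congr hcoord,
    multilinearExt_congr hcoord, multilinearExt_sub]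
  simp only [Pi.add_apply, Pi.smul_apply, Pi.single_eq_same, smul_eq_mul]
  ring

variable [Fintype ι]

theorem differentiable_multilinearExt :
    Differentiable ℝ (multilinearExt E m) := by
  unfold multilinearExt
  fun_prop

theorem fderiv_multilinearExt_insert_single {i : ι} (hi : i ∉ E) :
    fderiv ℝ (multilinearExt (insert i E) m) z (Pi.single i 1) =
      multilinearExt E (fun T => m (insert i T) - m T) z := by
  rw [← (differentiable_multilinearExt z).lineDeriv_eq_fderiv, lineDeriv]
  simp only [multilinearExt_add_smul_single hi]
  simp

end multilinearExt

theorem submodular_insert_insert {f : Finset ι → ℝ}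
    (hsub : ∀ A B, f (A ∪ B) + f (A ∩ B) ≤ f A + f B) {i j : ι} (hij : i ≠ j)
    (T : Finset ι) :
    f (insert i (insert j T)) + f T ≤ f (insert i T) + f (insert j T) := by
  have hunion : insert i T ∪ insert j T = insert i (insert j T) := by
    ext; simp only [mem_union, mem_insert]; tauto
  have hinter : insert i T ∩ insert j T = T := by
    ext; simp only [mem_inter, mem_insert]; grind
  simpa only [hunion, hinter] using hsub (insert i T) (insert j T)

theorem stmt_11 {n : ℕ} (f : Finset (Fin n) → ℝ)
    (hsub : ∀ A B, f (A ∪ B) + f (A ∩ B) ≤ f A + f B)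
    (F : (Fin n → ℝ) → ℝ)
    (hF : ∀ x, F x = ∑ S : Finset (Fin n),
      f S * ((∏ i ∈ S, x i) * ∏ i ∈ Sᶜ, (1 - x i)))
    (x y : Fin n → ℝ) (hx : ∀ k, x k ∈ Set.Icc (0:ℝ) 1)
    (hy : ∀ k, y k ∈ Set.Icc (0:ℝ) 1) (hxy : x ≤ y) (i : Fin n) :
    fderiv ℝ F y (Pi.single i 1) ≤ fderiv ℝ F x (Pi.single i 1) := by
  have hFext : F = multilinearExt (insert i (univ.erase i)) f := by
    rw [insert_erase (mem_univ i)]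
    funext z
    simp only [hF, multilinearExt, powerset_univ, compl_eq_univ_sdiff]
  have hmarginal : ∀ j ∈ univ.erase i, ∀ T : Finset (Fin n),
      f (insert i (insert j T)) - f (insert j T) ≤ f (insert i T) - f T := fun j hj T => by
    linarith [submodular_insert_insert hsub (ne_of_mem_erase hj).symm T]
  rw [hFext, fderiv_multilinearExt_insert_single (notMem_erase i univ),
    fderiv_multilinearExt_insert_single (notMem_erase i univ)]
  exact antitoneOn_multilinearExt hmarginal ⟨fun k => (hx k).1, fun k => (hx k).2⟩
    ⟨fun k => (hy k).1, fun k => (hy k).2⟩ hxy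
end

section
/- Let X_1,...,X_n be {0,1}-valued random variables with E[X_i] = x_i that are negatively correlated in the sense that for every T ⊆ [n], E[∏_{i∈T} X_i] ≤ ∏_{i∈T} x_i and E[∏_{i∈T}(1-X_i)] ≤ ∏_{i∈T}(1-x_i). Let a_i ∈ [0,1], X = ∑ a_i X_i, and μ ≥ ∑ a_i x_i. Then for any δ ≥ 0, Pr[X ≥ (1+δ)μ] ≤ (e^δ/(1+δ)^{1+δ})^μ. -/
/-!
Chernoff's method: by Markov's inequality, `Pr[X ≥ (1+δ)μ] ≤ (1+δ)^{-(1+δ)μ} E[e^{λX}]` with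
`λ = log (1+δ)`. Since each `X_i` is `{0,1}`-valued, `e^{λ a_i X_i} = 1 + c_i X_i` with
`c_i = (1+δ)^{a_i} - 1 ≥ 0`; expanding `∏ (1 + c_i X_i)` as a polynomial with nonnegative
coefficients in the monomials `∏_{i∈T} X_i`, negative correlation gives
`E[e^{λX}] ≤ ∏ (1 + c_i x_i)`, exactly the value for independent variables. Bernoulli's inequality
`(1+δ)^{a} ≤ 1 + aδ` and `1 + y ≤ e^y` then bound this by `e^{δμ}`.
-/

open MeasureTheory ProbabilityTheory Finset Real

theorem prod_one_add_mul_eq_sum_powerset {ι R : Type*} [CommSemiring R] (s : Finset ι)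
    (c y : ι → R) :
    ∏ i ∈ s, (1 + c i * y i) = ∑ T ∈ s.powerset, (∏ i ∈ T, c i) * ∏ i ∈ T, y i := by
  simp only [prod_one_add, prod_mul_distrib]

theorem exp_mul_eq_one_add_mul_of_eq_zero_or_eq_one {y : ℝ} (hy : y = 0 ∨ y = 1) (s : ℝ) :
    exp (s * y) = 1 + (exp s - 1) * y := by
  rcases hy with rfl | rfl <;> simp

theorem exp_mul_sum_eq_prod_of_eq_zero_or_eq_one {ι : Type*} (s : Finset ι) {y : ι → ℝ}
    (hy : ∀ i, y i = 0 ∨ y i = 1) (t : ℝ) (a : ι → ℝ) :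
    exp (t * ∑ i ∈ s, a i * y i) = ∏ i ∈ s, (1 + (exp (t * a i) - 1) * y i) := by
  rw [mul_sum, exp_sum]
  refine prod_congr rfl fun i _ => ?_
  rw [← mul_assoc, exp_mul_eq_one_add_mul_of_eq_zero_or_eq_one (hy i)]

theorem one_add_mul_one_add_rpow_sub_one_le_exp {δ a x : ℝ} (hδ : 0 ≤ δ) (ha : a ∈ Set.Icc 0 1)
    (hx : 0 ≤ x) : 1 + ((1 + δ) ^ a - 1) * x ≤ exp (δ * (a * x)) := by
  have bernoulli : (1 + δ) ^ a - 1 ≤ a * δ := by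
    linarith [rpow_one_add_le_one_add_mul_self (s := δ) (by linarith) ha.1 ha.2]
  calc 1 + ((1 + δ) ^ a - 1) * x ≤ δ * (a * x) + 1 := by nlinarith
    _ ≤ exp (δ * (a * x)) := add_one_le_exp _

theorem exp_neg_log_mul_mul_exp_eq_rpow {δ : ℝ} (hδ : 0 ≤ δ) (m : ℝ) :
    exp (-log (1 + δ) * ((1 + δ) * m)) * exp (δ * m) = (exp δ / (1 + δ) ^ (1 + δ)) ^ m := by
  have h1δ : 0 < 1 + δ := by linarith
  rw [rpow_def_of_pos h1δ, ← exp_sub, rpow_def_of_pos (exp_pos _), log_exp, ← exp_add]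
  ring_nf

section NegativeCorrelation

variable {Ω ι : Type*} [MeasurableSpace Ω] {P : Measure Ω} {X : ι → Ω → ℝ}

theorem integrable_finset_prod_of_norm_le_one [IsFiniteMeasure P]
    (hmeas : ∀ i, Measurable (X i)) (hX : ∀ i ω, ‖X i ω‖ ≤ 1) (T : Finset ι) :
    Integrable (fun ω => ∏ i ∈ T, X i ω) P := by
  refine Integrable.of_bound (Finset.measurable_prod T fun i _ => hmeas i).aestronglyMeasurable 1
    (Filter.Eventually.of_forall fun ω => ?_)
  rw [norm_prod]
  exact prod_le_one (fun i _ => norm_nonneg _) fun i _ => hX i ω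

variable [Fintype ι]

theorem integrable_prod_one_add_mul
    (hint : ∀ T : Finset ι, Integrable (fun ω => ∏ i ∈ T, X i ω) P) (c : ι → ℝ) :
    Integrable (fun ω => ∏ i, (1 + c i * X i ω)) P := by
  simp_rw [prod_one_add_mul_eq_sum_powerset]
  exact integrable_finsetSum _ fun T _ => (hint T).const_mul _

theorem integral_prod_one_add_mul_le
    (hint : ∀ T : Finset ι, Integrable (fun ω => ∏ i ∈ T, X i ω) P) {x : ι → ℝ}
    (hneg : ∀ T : Finset ι, ∫ ω, ∏ i ∈ T, X i ω ∂P ≤ ∏ i ∈ T, x i)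
    {c : ι → ℝ} (hc : ∀ i, 0 ≤ c i) :
    ∫ ω, ∏ i, (1 + c i * X i ω) ∂P ≤ ∏ i, (1 + c i * x i) := by
  simp_rw [prod_one_add_mul_eq_sum_powerset]
  rw [integral_finsetSum _ fun T _ => (hint T).const_mul _]
  refine sum_le_sum fun T _ => ?_
  rw [integral_const_mul]
  exact mul_le_mul_of_nonneg_left (hneg T) (prod_nonneg fun i _ => hc i)

theorem integrable_exp_mul_sum_and_mgf_sum_le_prod [IsFiniteMeasure P]
    (hmeas : ∀ i, Measurable (X i)) (h01 : ∀ i ω, X i ω = 0 ∨ X i ω = 1) {x : ι → ℝ}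
    (hneg : ∀ T : Finset ι, ∫ ω, ∏ i ∈ T, X i ω ∂P ≤ ∏ i ∈ T, x i)
    {a : ι → ℝ} (ha : ∀ i, 0 ≤ a i) {t : ℝ} (ht : 0 ≤ t) :
    Integrable (fun ω => exp (t * ∑ i, a i * X i ω)) P ∧
      mgf (fun ω => ∑ i, a i * X i ω) P t ≤ ∏ i, (1 + (exp (t * a i) - 1) * x i) := by
  have hint := integrable_finset_prod_of_norm_le_one (P := P) hmeas fun i ω => by
    rcases h01 i ω with h | h <;> simp [h]
  have hexp : (fun ω => exp (t * ∑ i, a i * X i ω)) =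
      fun ω => ∏ i, (1 + (exp (t * a i) - 1) * X i ω) :=
    funext fun ω => exp_mul_sum_eq_prod_of_eq_zero_or_eq_one _ (fun i => h01 i ω) t a
  refine ⟨hexp ▸ integrable_prod_one_add_mul hint _, ?_⟩
  rw [mgf, hexp]
  exact integral_prod_one_add_mul_le hint hneg fun i =>
    sub_nonneg.2 (one_le_exp (mul_nonneg ht (ha i)))

end NegativeCorrelation

theorem stmt_13_general {Ω : Type*} [MeasurableSpace Ω] (P : Measure Ω) [IsProbabilityMeasure P]
    {n : ℕ} (X : Fin n → Ω → ℝ) (x : Fin n → ℝ)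
    (hmeas : ∀ i, Measurable (X i))
    (h01 : ∀ i ω, X i ω = 0 ∨ X i ω = 1)
    (hneg : ∀ T : Finset (Fin n), ∫ ω, ∏ i ∈ T, X i ω ∂P ≤ ∏ i ∈ T, x i)
    (a : Fin n → ℝ) (ha : ∀ i, a i ∈ Set.Icc (0:ℝ) 1)
    (m : ℝ) (hm : ∑ i, a i * x i ≤ m)
    (δ : ℝ) (hδ : 0 ≤ δ) :
    (P {ω | (1 + δ) * m ≤ ∑ i, a i * X i ω}).toReal
      ≤ (Real.exp δ / (1 + δ) ^ (1 + δ)) ^ m := by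
  have hx : ∀ i, 0 ≤ x i := fun i => by
    simpa using (integral_nonneg fun ω => by rcases h01 i ω with h | h <;> simp [h]).trans
      (hneg {i})
  have hlog : 0 ≤ log (1 + δ) := log_nonneg (by linarith)
  obtain ⟨hint, hmgf⟩ := integrable_exp_mul_sum_and_mgf_sum_le_prod hmeas h01 hneg
    (fun i => (ha i).1) hlog
  have hprod : ∏ i, (1 + (exp (log (1 + δ) * a i) - 1) * x i) ≤ exp (δ * m) :=
    calc ∏ i, (1 + (exp (log (1 + δ) * a i) - 1) * x i) ≤ ∏ i, exp (δ * (a i * x i)) := by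
          refine prod_le_prod (fun i _ => ?_) fun i _ => ?_
          · nlinarith [one_le_exp (mul_nonneg hlog (ha i).1), hx i]
          · rw [← rpow_def_of_pos (by linarith)]
            exact one_add_mul_one_add_rpow_sub_one_le_exp hδ (ha i) (hx i)
      _ = exp (δ * ∑ i, a i * x i) := by rw [mul_sum, exp_sum]
      _ ≤ exp (δ * m) := exp_le_exp.2 (mul_le_mul_of_nonneg_left hm hδ)
  calc (P {ω | (1 + δ) * m ≤ ∑ i, a i * X i ω}).toReal
      ≤ exp (-log (1 + δ) * ((1 + δ) * m)) * mgf (fun ω => ∑ i, a i * X i ω) P (log (1 + δ)) :=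
        measure_ge_le_exp_mul_mgf _ hlog hint
    _ ≤ exp (-log (1 + δ) * ((1 + δ) * m)) * exp (δ * m) := by gcongr; exact hmgf.trans hprod
    _ = (Real.exp δ / (1 + δ) ^ (1 + δ)) ^ m := exp_neg_log_mul_mul_exp_eq_rpow hδ m

theorem stmt_13 {Ω : Type*} [MeasurableSpace Ω] (P : Measure Ω) [IsProbabilityMeasure P]
    {n : ℕ} (X : Fin n → Ω → ℝ) (x : Fin n → ℝ)
    (hmeas : ∀ i, Measurable (X i))
    (h01 : ∀ i ω, X i ω = 0 ∨ X i ω = 1)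
    (hmean : ∀ i, ∫ ω, X i ω ∂P = x i)
    (hneg : ∀ T : Finset (Fin n), ∫ ω, ∏ i ∈ T, X i ω ∂P ≤ ∏ i ∈ T, x i)
    (hneg' : ∀ T : Finset (Fin n),
      ∫ ω, ∏ i ∈ T, (1 - X i ω) ∂P ≤ ∏ i ∈ T, (1 - x i))
    (a : Fin n → ℝ) (ha : ∀ i, a i ∈ Set.Icc (0:ℝ) 1)
    (m : ℝ) (hm : ∑ i, a i * x i ≤ m)
    (δ : ℝ) (hδ : 0 ≤ δ) :
    (P {ω | (1 + δ) * m ≤ ∑ i, a i * X i ω}).toReal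
      ≤ (Real.exp δ / (1 + δ) ^ (1 + δ)) ^ m :=
  stmt_13_general P X x hmeas h01 hneg a ha m hm δ hδ
end

section
/- Let X_1,...,X_n be {0,1}-valued random variables with E[X_i] = x_i satisfying E[∏_{i∈T}(1-X_i)] ≤ ∏_{i∈T}(1-x_i) for every T ⊆ [n]. Let a_i ∈ [0,1], X = ∑ a_i X_i, and μ ≤ ∑ a_i x_i. Then for any δ ∈ [0,1], Pr[X ≤ (1-δ)μ] ≤ e^{-μδ²/2}. -/
open MeasureTheory ProbabilityTheory Finset Real

/-! Chernoff's method with parameter `δ`. As `X i ∈ {0, 1}`, `exp (-δ a_i X_i) = 1 - c_i X_i` with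
`c_i = 1 - exp (-δ a_i) ∈ [0, 1]`, and expanding `∏ (c_i (1 - X_i) + (1 - c_i))` over subsets `T`
writes `exp (-δ X)` as a nonnegative combination of the products `∏_{i ∈ T} (1 - X_i)`. Negative
correlation therefore bounds the moment generating function by
`∏ (1 - c_i x_i) ≤ exp (-∑ c_i x_i) ≤ exp (-(1 - exp (-δ)) μ)`, where convexity of `exp` gives
`c_i ≥ a_i (1 - exp (-δ))`. Markov's inequality and `1 - exp (-δ) ≥ δ - δ² / 2` finish. -/

theorem Finset.prod_one_sub_mul_eq_sum_powerset {ι R : Type*} [DecidableEq ι] [CommRing R]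
    (s : Finset ι) (c y : ι → R) :
    ∏ i ∈ s, (1 - c i * y i) =
      ∑ T ∈ s.powerset, ((∏ i ∈ T, c i) * ∏ i ∈ s \ T, (1 - c i)) * ∏ i ∈ T, (1 - y i) := by
  have hsplit : ∀ i, 1 - c i * y i = c i * (1 - y i) + (1 - c i) := fun i => by ring
  simp_rw [hsplit, prod_add, prod_mul_distrib]
  exact sum_congr rfl fun T _ => by ring

theorem Real.exp_neg_mul_of_eq_zero_or_one (t : ℝ) {y : ℝ} (hy : y = 0 ∨ y = 1) :
    exp (-(t * y)) = 1 - (1 - exp (-t)) * y := by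
  rcases hy with rfl | rfl <;> simp

theorem Real.mul_one_sub_exp_neg_le_one_sub_exp_neg_mul (t : ℝ) {a : ℝ} (ha : a ∈ Set.Icc 0 1) :
    a * (1 - exp (-t)) ≤ 1 - exp (-(t * a)) := by
  have hconv := convexOn_exp.2 (Set.mem_univ (-t)) (Set.mem_univ 0) ha.1 (sub_nonneg.2 ha.2)
    (add_sub_cancel a 1)
  simp only [smul_eq_mul, mul_zero, add_zero, exp_zero, mul_one] at hconv
  rw [show -(t * a) = a * -t by ring]
  linarith

theorem Real.sub_sq_div_two_le_one_sub_exp_neg {t : ℝ} (ht : 0 ≤ t) :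
    t - t ^ 2 / 2 ≤ 1 - exp (-t) := by
  have hquad := quadratic_le_exp_of_nonneg ht
  have hinv : exp (-t) * exp t = 1 := by rw [← exp_add, neg_add_cancel, exp_zero]
  nlinarith [exp_pos (-t), exp_pos t]

theorem MeasureTheory.integral_prod_one_sub_mul_le {Ω ι : Type*} [MeasurableSpace Ω]
    {P : Measure Ω} [Fintype ι] [DecidableEq ι] {X : ι → Ω → ℝ} {x c : ι → ℝ}
    (hint : ∀ T : Finset ι, Integrable (fun ω => ∏ i ∈ T, (1 - X i ω)) P)
    (hneg : ∀ T : Finset ι, ∫ ω, ∏ i ∈ T, (1 - X i ω) ∂P ≤ ∏ i ∈ T, (1 - x i))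
    (hc : ∀ i, c i ∈ Set.Icc 0 1) :
    ∫ ω, ∏ i, (1 - c i * X i ω) ∂P ≤ ∏ i, (1 - c i * x i) := by
  have hcoef : ∀ T : Finset ι, 0 ≤ (∏ i ∈ T, c i) * ∏ i ∈ univ \ T, (1 - c i) := fun T =>
    mul_nonneg (prod_nonneg fun i _ => (hc i).1) (prod_nonneg fun i _ => sub_nonneg.2 (hc i).2)
  simp_rw [prod_one_sub_mul_eq_sum_powerset univ c]
  rw [integral_finsetSum _ fun T _ => (hint T).const_mul _]
  refine sum_le_sum fun T _ => ?_
  rw [integral_const_mul]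
  exact mul_le_mul_of_nonneg_left (hneg T) (hcoef T)

section ZeroOneValued

variable {Ω ι : Type*} [MeasurableSpace Ω] {P : Measure Ω} {X : ι → Ω → ℝ}

theorem MeasureTheory.integral_mem_Icc_of_eq_zero_or_one [IsProbabilityMeasure P] {Y : Ω → ℝ}
    (hY : ∀ ω, Y ω = 0 ∨ Y ω = 1) : ∫ ω, Y ω ∂P ∈ Set.Icc 0 1 := by
  have hbound : ∀ ω, ‖Y ω‖ ≤ 1 := fun ω => by rcases hY ω with h | h <;> simp [h]
  refine ⟨integral_nonneg fun ω => by rcases hY ω with h | h <;> simp [h], ?_⟩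
  have hle := norm_integral_le_of_norm_le_const (μ := P) (ae_of_all _ hbound)
  rw [probReal_univ, mul_one, Real.norm_eq_abs] at hle
  exact (le_abs_self _).trans hle

theorem MeasureTheory.integrable_prod_one_sub_of_eq_zero_or_one [IsFiniteMeasure P]
    (hmeas : ∀ i, Measurable (X i)) (h01 : ∀ i ω, X i ω = 0 ∨ X i ω = 1) (T : Finset ι) :
    Integrable (fun ω => ∏ i ∈ T, (1 - X i ω)) P := by
  refine .of_bound (by fun_prop) 1 (ae_of_all _ fun ω => ?_)
  rw [norm_prod]
  exact prod_le_one (fun _ _ => norm_nonneg _) fun i _ => by rcases h01 i ω with h | h <;> simp [h]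

variable [Fintype ι] {a : ι → ℝ}

theorem MeasureTheory.integrable_exp_neg_mul_sum_of_eq_zero_or_one [IsFiniteMeasure P]
    (hmeas : ∀ i, Measurable (X i)) (h01 : ∀ i ω, X i ω = 0 ∨ X i ω = 1) (ha : ∀ i, 0 ≤ a i)
    {t : ℝ} (ht : 0 ≤ t) : Integrable (fun ω => exp (-t * ∑ i, a i * X i ω)) P := by
  refine .of_bound (by fun_prop) 1 (ae_of_all _ fun ω => ?_)
  have hsum : 0 ≤ ∑ i, a i * X i ω := sum_nonneg fun i _ =>
    mul_nonneg (ha i) (by rcases h01 i ω with h | h <;> simp [h])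
  rw [Real.norm_of_nonneg (exp_pos _).le, exp_le_one_iff]
  nlinarith

theorem ProbabilityTheory.mgf_neg_sum_le_of_negCorrelated [IsProbabilityMeasure P] {x : ι → ℝ}
    (hmeas : ∀ i, Measurable (X i)) (h01 : ∀ i ω, X i ω = 0 ∨ X i ω = 1)
    (hmean : ∀ i, ∫ ω, X i ω ∂P = x i)
    (hneg : ∀ T : Finset ι, ∫ ω, ∏ i ∈ T, (1 - X i ω) ∂P ≤ ∏ i ∈ T, (1 - x i))
    (ha : ∀ i, a i ∈ Set.Icc 0 1) {t : ℝ} (ht : 0 ≤ t) :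
    mgf (fun ω => ∑ i, a i * X i ω) P (-t) ≤ exp (-((1 - exp (-t)) * ∑ i, a i * x i)) := by
  classical
  set c : ι → ℝ := fun i => 1 - exp (-(t * a i))
  have hc : ∀ i, c i ∈ Set.Icc 0 1 := fun i =>
    ⟨sub_nonneg.2 (exp_le_one_iff.2 (neg_nonpos.2 (mul_nonneg ht (ha i).1))),
      sub_le_self _ (exp_pos _).le⟩
  have hx : ∀ i, x i ∈ Set.Icc 0 1 := fun i => hmean i ▸ integral_mem_Icc_of_eq_zero_or_one (h01 i)
  have hmgf : mgf (fun ω => ∑ i, a i * X i ω) P (-t) = ∫ ω, ∏ i, (1 - c i * X i ω) ∂P := by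
    refine integral_congr_ae (ae_of_all _ fun ω => ?_)
    simp only [mul_sum, neg_mul, ← mul_assoc, exp_sum]
    exact prod_congr rfl fun i _ => exp_neg_mul_of_eq_zero_or_one _ (h01 i ω)
  calc mgf (fun ω => ∑ i, a i * X i ω) P (-t)
      = ∫ ω, ∏ i, (1 - c i * X i ω) ∂P := hmgf
    _ ≤ ∏ i, (1 - c i * x i) :=
      integral_prod_one_sub_mul_le (integrable_prod_one_sub_of_eq_zero_or_one hmeas h01) hneg hc
    _ ≤ ∏ i, exp (-(c i * x i)) :=
      prod_le_prod (fun i _ => sub_nonneg.2 (mul_le_one₀ (hc i).2 (hx i).1 (hx i).2))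
        fun i _ => one_sub_le_exp_neg _
    _ = exp (-∑ i, c i * x i) := by rw [← exp_sum, sum_neg_distrib]
    _ ≤ exp (-((1 - exp (-t)) * ∑ i, a i * x i)) := by
      gcongr
      rw [mul_sum]
      refine sum_le_sum fun i _ => ?_
      rw [← mul_assoc, mul_comm (1 - exp (-t))]
      exact mul_le_mul_of_nonneg_right (mul_one_sub_exp_neg_le_one_sub_exp_neg_mul t (ha i))
        (hx i).1

end ZeroOneValued

theorem stmt_14 {Ω : Type*} [MeasurableSpace Ω] (P : Measure Ω) [IsProbabilityMeasure P]
    {n : ℕ} (X : Fin n → Ω → ℝ) (x : Fin n → ℝ)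
    (hmeas : ∀ i, Measurable (X i))
    (h01 : ∀ i ω, X i ω = 0 ∨ X i ω = 1)
    (hmean : ∀ i, ∫ ω, X i ω ∂P = x i)
    (hneg' : ∀ T : Finset (Fin n),
      ∫ ω, ∏ i ∈ T, (1 - X i ω) ∂P ≤ ∏ i ∈ T, (1 - x i))
    (a : Fin n → ℝ) (ha : ∀ i, a i ∈ Set.Icc (0:ℝ) 1)
    (m : ℝ) (hm : m ≤ ∑ i, a i * x i)
    (δ : ℝ) (hδ : δ ∈ Set.Icc (0:ℝ) 1) :
    (P {ω | ∑ i, a i * X i ω ≤ (1 - δ) * m}).toReal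
      ≤ Real.exp (-(m * δ ^ 2) / 2) := by
  rcases le_or_gt m 0 with hm0 | hm0
  · exact (measureReal_le_one (μ := P)).trans (one_le_exp (by nlinarith [sq_nonneg δ]))
  have hchernoff := measure_le_le_exp_mul_mgf (μ := P) ((1 - δ) * m) (neg_nonpos.2 hδ.1)
    (integrable_exp_neg_mul_sum_of_eq_zero_or_one hmeas h01 (fun i => (ha i).1) hδ.1)
  have hmgf := mgf_neg_sum_le_of_negCorrelated hmeas h01 hmean hneg' ha hδ.1
  have hexp := sub_sq_div_two_le_one_sub_exp_neg hδ.1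
  have hrate : 0 ≤ 1 - exp (-δ) := sub_nonneg.2 (exp_le_one_iff.2 (neg_nonpos.2 hδ.1))
  calc (P {ω | ∑ i, a i * X i ω ≤ (1 - δ) * m}).toReal
      ≤ exp (- -δ * ((1 - δ) * m)) * exp (-((1 - exp (-δ)) * ∑ i, a i * x i)) :=
        hchernoff.trans (by gcongr)
    _ ≤ exp (- -δ * ((1 - δ) * m)) * exp (-((1 - exp (-δ)) * m)) := by
        gcongr
    _ ≤ exp (-(m * δ ^ 2) / 2) := by
        rw [← exp_add, exp_le_exp]
        nlinarith
end
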